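/- arXiv:1805.00229 — 2 statements merged into one kernel-verified Lean document; each statement's English description precedes it below -/
import Mathlib

section
/- Let P = (S, 𝓛) be a thick nondegenerate embeddable polar space of rank at least 3, let W be a proper subspace of P contained in some hyperplane of P, and let K, L be two distinct proper lines of D(P, W) with K ∥ L. Then there is a finite sequence Π₁, …, Πₙ of planes of D(P, W) such that the common point K^∞ = L^∞ lies in the closure of each Πᵢ, K ⊆ Π₁, L ⊆ Πₙ, and Πⱼ and Πⱼ₊₁ share a line of D(P, W) for each j = 1, …, n−1. -/
namespace PolarComp

variable {S : Type*}

/-- A partial linear space: every line has at least two points, and two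
distinct lines share at most one point. -/
def IsPLS (𝓛 : Set (Set S)) : Prop :=
  (∀ l ∈ 𝓛, ∃ a b : S, a ≠ b ∧ a ∈ l ∧ b ∈ l) ∧
  (∀ l ∈ 𝓛, ∀ m ∈ 𝓛, l ≠ m → ∀ a b : S, a ∈ l ∩ m → b ∈ l ∩ m → a = b)

/-- Thick: every line has at least three points. -/
def Thick (𝓛 : Set (Set S)) : Prop :=
  ∀ l ∈ 𝓛, ∃ a b c : S, a ≠ b ∧ a ≠ c ∧ b ≠ c ∧ a ∈ l ∧ b ∈ l ∧ c ∈ l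

/-- Two points are collinear iff they lie on a common line (every point is
collinear with itself). -/
def Collin (𝓛 : Set (Set S)) (a b : S) : Prop :=
  a = b ∨ ∃ l ∈ 𝓛, a ∈ l ∧ b ∈ l

/-- Nondegenerate: no point is collinear with all other points. -/
def Nondegenerate (𝓛 : Set (Set S)) : Prop :=
  ∀ a : S, ∃ b : S, ¬ Collin 𝓛 a b

/-- The one-or-all axiom: a point off a line is collinear with exactly one or
with all points of the line. -/
def OneOrAll (𝓛 : Set (Set S)) : Prop :=
  ∀ l ∈ 𝓛, ∀ a : S, a ∉ l →
    (∃! b, b ∈ l ∧ Collin 𝓛 a b) ∨ (∀ b ∈ l, Collin 𝓛 a b)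

/-- A polar space is a partial linear space satisfying the one-or-all axiom. -/
def IsPolarSpace (𝓛 : Set (Set S)) : Prop := IsPLS 𝓛 ∧ OneOrAll 𝓛

/-- A subspace: contains every line meeting it in at least two points. -/
def IsSubspace (𝓛 : Set (Set S)) (X : Set S) : Prop :=
  ∀ l ∈ 𝓛, (∃ a ∈ l ∩ X, ∃ b ∈ l ∩ X, a ≠ b) → l ⊆ X

/-- A hyperplane: a proper subspace meeting every line. -/
def IsHyperplane (𝓛 : Set (Set S)) (X : Set S) : Prop :=
  IsSubspace 𝓛 X ∧ X ≠ Set.univ ∧ ∀ l ∈ 𝓛, (l ∩ X).Nonempty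

/-- A singular set: any two of its points are collinear. -/
def SingularSet (𝓛 : Set (Set S)) (X : Set S) : Prop :=
  ∀ a ∈ X, ∀ b ∈ X, Collin 𝓛 a b

/-- Rank at least `n`: there is a strictly increasing chain of `n` nonempty
singular subspaces. -/
def RankAtLeast (𝓛 : Set (Set S)) (n : ℕ) : Prop :=
  ∃ X : Fin n → Set S, StrictMono X ∧
    ∀ i, (X i).Nonempty ∧ SingularSet 𝓛 (X i) ∧ IsSubspace 𝓛 (X i)

/-- `perp 𝓛 a` is the set of points collinear with `a`. -/
def perp (𝓛 : Set (Set S)) (a : S) : Set S := {b | Collin 𝓛 a b}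

/-- The radical of `X`: `X ∩ X^⊥`. -/
def radSet (𝓛 : Set (Set S)) (X : Set S) : Set S :=
  X ∩ {a | ∀ b ∈ X, Collin 𝓛 a b}

/-- The lines of the complement `D(P, W)`. -/
def compLines (𝓛 : Set (Set S)) (W : Set S) : Set (Set S) :=
  {K | ∃ k ∈ 𝓛, ¬ k ⊆ W ∧ K = k \ W}

/-- Two proper lines are parallel iff their closures meet in `W`. -/
def Parallel (𝓛 : Set (Set S)) (W : Set S) (K L : Set S) : Prop :=
  ∃ k ∈ 𝓛, ∃ l ∈ 𝓛, ¬ k ⊆ W ∧ ¬ l ⊆ W ∧ K = k \ W ∧ L = l \ W ∧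
    (k ∩ l ∩ W).Nonempty

/-- A proper line is affine iff its closure meets `W`. -/
def IsAffineLine (𝓛 : Set (Set S)) (W : Set S) (K : Set S) : Prop :=
  ∃ k ∈ 𝓛, ¬ k ⊆ W ∧ K = k \ W ∧ (k ∩ W).Nonempty

/-- `AtInfinity 𝓛 W K a` says that `a = K^∞`, i.e. `a` is a point of `K̄ ∩ W`. -/
def AtInfinity (𝓛 : Set (Set S)) (W : Set S) (K : Set S) (a : S) : Prop :=
  ∃ k ∈ 𝓛, ¬ k ⊆ W ∧ K = k \ W ∧ a ∈ k ∩ W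

/-- A deep point of `W`: a point of `W` which is `L^∞` for no affine line `L`. -/
def IsDeepPoint (𝓛 : Set (Set S)) (W : Set S) (a : S) : Prop :=
  a ∈ W ∧ ∀ K : Set S, ¬ AtInfinity 𝓛 W K a

/-- A plane: a minimal singular subspace containing a given line and a given
point not on that line. -/
def IsPlane (𝓛 : Set (Set S)) (X : Set S) : Prop :=
  ∃ l ∈ 𝓛, ∃ a : S, a ∉ l ∧ a ∈ X ∧ l ⊆ X ∧
    SingularSet 𝓛 X ∧ IsSubspace 𝓛 X ∧
    ∀ Y : Set S, SingularSet 𝓛 Y → IsSubspace 𝓛 Y → l ⊆ Y → a ∈ Y → Y ⊆ X → Y = X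

/-- `Π^∞`: the points at infinity of a plane of the complement with closure `Pl`. -/
def planeInfinity (𝓛 : Set (Set S)) (W : Set S) (Pl : Set S) : Set S :=
  {a | ∃ M : Set S, IsAffineLine 𝓛 W M ∧ M ⊆ Pl \ W ∧ AtInfinity 𝓛 W M a}

/-- A deep line: an improper line `L ⊆ W` which is `Π^∞` for no plane of the
complement. -/
def IsDeepLine (𝓛 : Set (Set S)) (W : Set S) (L : Set S) : Prop :=
  L ∈ 𝓛 ∧ L ⊆ W ∧
    ∀ Pl : Set S, IsPlane 𝓛 Pl → ¬ Pl ⊆ W → planeInfinity 𝓛 W Pl ≠ L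

/-- The relation `∥*` on proper lines of the complement. -/
def ParStar (𝓛 : Set (Set S)) (W : Set S) (K₁ K₂ : Set S) : Prop :=
  K₁ ∈ compLines 𝓛 W ∧ K₂ ∈ compLines 𝓛 W ∧ K₁ ∩ K₂ = ∅ ∧
    ∃ L₁ ∈ compLines 𝓛 W, ∃ L₂ ∈ compLines 𝓛 W, L₁ ≠ L₂ ∧
      (L₁ ∩ L₂).Nonempty ∧ (L₁ ∩ K₁).Nonempty ∧ (L₁ ∩ K₂).Nonempty ∧
      (L₂ ∩ K₁).Nonempty ∧ (L₂ ∩ K₂).Nonempty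

/-- `∥ᵗ`: the transitive closure of `∥*`. -/
def ParT (𝓛 : Set (Set S)) (W : Set S) : Set S → Set S → Prop :=
  Relation.TransGen (ParStar 𝓛 W)

/-- The anti-euclidean relation `~` on affine lines: `K₁ ~ K₂` iff no affine
line through a point of `K₁` is parallel to `K₂`. -/
def Tilde (𝓛 : Set (Set S)) (W : Set S) (K₁ K₂ : Set S) : Prop :=
  ∀ a ∈ K₁, ∀ M : Set S, IsAffineLine 𝓛 W M → a ∈ M → ¬ Parallel 𝓛 W M K₂

/-- `[K₁] ≡ [K₂]`: `M ~ N` and `N ~ M` for all `M ∥ K₁` and `N ∥ K₂`. -/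
def EquivCls (𝓛 : Set (Set S)) (W : Set S) (K₁ K₂ : Set S) : Prop :=
  ∀ M N : Set S, IsAffineLine 𝓛 W M → IsAffineLine 𝓛 W N →
    Parallel 𝓛 W M K₁ → Parallel 𝓛 W N K₂ → Tilde 𝓛 W M N ∧ Tilde 𝓛 W N M

/-- The parallel class of an affine line. -/
def parClass (𝓛 : Set (Set S)) (W : Set S) (L : Set S) : Set (Set S) :=
  {M | IsAffineLine 𝓛 W M ∧ Parallel 𝓛 W M L}

/-- The class of affine lines with point at infinity `w`. -/
def classAt (𝓛 : Set (Set S)) (W : Set S) (w : S) : Set (Set S) :=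
  {L | IsAffineLine 𝓛 W L ∧ AtInfinity 𝓛 W L w}

/-- A witness that the polar space embeds in a projective space `ℙ(F, V)`. -/
structure EmbeddingWitness (𝓛 : Set (Set S)) where
  F : Type
  [iF : DivisionRing F]
  V : Type
  [iV : AddCommGroup V]
  [iM : Module F V]
  f : S → Projectivization F V
  inj : Function.Injective f
  spanning : ∀ T : Submodule F V, (∀ s : S, Projectivization.submodule (f s) ≤ T) → T = ⊤
  lines2dim : ∀ l ∈ 𝓛, ∃ U : Submodule F V, Module.finrank F ↥U = 2 ∧
    f '' l = {p | ∃ v : V, ∃ hv : v ≠ 0, v ∈ U ∧ p = Projectivization.mk F v hv}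

/-- An embeddable polar space. -/
def Embeddable (𝓛 : Set (Set S)) : Prop := Nonempty (EmbeddingWitness 𝓛)

/-!
Write `a` for the common point at infinity of `K` and `L`. The lines through `a`, with the
pencils of lines through `a` in the planes on `a` as lines, form the residue of `P` at `a`. It is
again thick, nondegenerate and satisfies the one-or-all axiom; the embedding enters here, because
in an embedded polar space two lines of a plane always meet, so any two lines of a plane span it.
The same fact makes the lines through `a` inside `W` a subspace of the residue. In such a geometry
the complement of every subspace is connected, so the closures of `K` and `L` are joined by a
path of lines through `a` outside `W`, consecutive lines spanning a plane on `a`; these planes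
form the required sequence.
-/

section Basic

variable {𝓛 : Set (Set S)}

theorem Collin.refl (a : S) : Collin 𝓛 a a := Or.inl rfl

theorem Collin.symm {a b : S} (h : Collin 𝓛 a b) : Collin 𝓛 b a :=
  h.imp Eq.symm fun ⟨l, hl, ha, hb⟩ => ⟨l, hl, hb, ha⟩

theorem collin_of_mem {l : Set S} (hl : l ∈ 𝓛) {a b : S} (ha : a ∈ l) (hb : b ∈ l) :
    Collin 𝓛 a b :=
  Or.inr ⟨l, hl, ha, hb⟩

theorem Collin.exists_line {a b : S} (h : Collin 𝓛 a b) (hab : a ≠ b) :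
    ∃ l ∈ 𝓛, a ∈ l ∧ b ∈ l :=
  h.resolve_left hab

theorem IsPLS.line_eq (hp : IsPLS 𝓛) {l m : Set S} (hl : l ∈ 𝓛) (hm : m ∈ 𝓛) {a b : S}
    (hab : a ≠ b) (hal : a ∈ l) (ham : a ∈ m) (hbl : b ∈ l) (hbm : b ∈ m) : l = m :=
  by_contra fun hlm => hab (hp.2 l hl m hm hlm a b ⟨hal, ham⟩ ⟨hbl, hbm⟩)

theorem IsPLS.exists_ne_mem (hp : IsPLS 𝓛) {l : Set S} (hl : l ∈ 𝓛) (s : S) :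
    ∃ b ∈ l, b ≠ s := by
  obtain ⟨x, y, hxy, hx, hy⟩ := hp.1 l hl
  by_cases hxs : x = s
  · exact ⟨y, hy, fun h => hxy (hxs.trans h.symm)⟩
  · exact ⟨x, hx, hxs⟩

theorem IsPLS.nonempty (hp : IsPLS 𝓛) {l : Set S} (hl : l ∈ 𝓛) : l.Nonempty :=
  let ⟨x, _, _, hx, _⟩ := hp.1 l hl
  ⟨x, hx⟩

theorem IsPLS.eq_of_subset (hp : IsPLS 𝓛) {l m : Set S} (hl : l ∈ 𝓛) (hm : m ∈ 𝓛)
    (hlm : l ⊆ m) : l = m := by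
  obtain ⟨x, y, hxy, hx, hy⟩ := hp.1 l hl
  exact hp.line_eq hl hm hxy hx (hlm hx) hy (hlm hy)

theorem Thick.nonempty (ht : Thick 𝓛) {l : Set S} (hl : l ∈ 𝓛) : l.Nonempty :=
  let ⟨a, _, _, _, _, _, ha, _⟩ := ht l hl
  ⟨a, ha⟩

theorem Thick.exists_ne_ne (ht : Thick 𝓛) {l : Set S} (hl : l ∈ 𝓛) (x y : S) :
    ∃ z ∈ l, z ≠ x ∧ z ≠ y := by
  obtain ⟨a, b, c, hab, hac, hbc, ha, hb, hc⟩ := ht l hl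
  by_contra! h
  have hxy : ∀ z ∈ l, z = x ∨ z = y := fun z hz => or_iff_not_imp_left.2 (h z hz)
  rcases hxy a ha with rfl | rfl <;> rcases hxy b hb with rfl | rfl <;>
    rcases hxy c hc with rfl | rfl <;> simp_all

theorem OneOrAll.exists_collin (hoa : OneOrAll 𝓛) {l : Set S} (hl : l ∈ 𝓛) (hne : l.Nonempty)
    (x : S) : ∃ z ∈ l, Collin 𝓛 x z := by
  by_cases hx : x ∈ l
  · exact ⟨x, hx, Collin.refl x⟩
  obtain ⟨b, ⟨hb, hxb⟩, -⟩ | hall := hoa l hl x hx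
  · exact ⟨b, hb, hxb⟩
  · obtain ⟨b, hb⟩ := hne
    exact ⟨b, hb, hall b hb⟩

theorem OneOrAll.subset_perp (hoa : OneOrAll 𝓛) {l : Set S} (hl : l ∈ 𝓛) {x c d : S}
    (hc : c ∈ l) (hd : d ∈ l) (hcd : c ≠ d) (hxc : Collin 𝓛 x c) (hxd : Collin 𝓛 x d) :
    l ⊆ perp 𝓛 x := by
  intro e he
  by_cases hx : x ∈ l
  · exact collin_of_mem hl hx he
  obtain ⟨b, -, hb⟩ | hall := hoa l hl x hx
  · exact absurd ((hb c ⟨hc, hxc⟩).trans (hb d ⟨hd, hxd⟩).symm) hcd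
  · exact hall e he

theorem oneOrAll_of_forall (h7 : ∀ l ∈ 𝓛, ∀ x, ∃ z ∈ l, Collin 𝓛 x z)
    (h2 : ∀ l ∈ 𝓛, ∀ x c d, c ∈ l → d ∈ l → c ≠ d → Collin 𝓛 x c → Collin 𝓛 x d →
      l ⊆ perp 𝓛 x) :
    OneOrAll 𝓛 := by
  intro l hl x _
  by_cases hall : l ⊆ perp 𝓛 x
  · exact Or.inr hall
  obtain ⟨z, hz, hxz⟩ := h7 l hl x
  exact Or.inl ⟨z, ⟨hz, hxz⟩, fun b ⟨hb, hxb⟩ =>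
    by_contra fun hbz => hall (h2 l hl x b z hb hz hbz hxb hxz)⟩

theorem SingularSet.mono {X Y : Set S} (hX : SingularSet 𝓛 X) (hYX : Y ⊆ X) :
    SingularSet 𝓛 Y :=
  fun u hu v hv => hX u (hYX hu) v (hYX hv)

theorem singularSet_of_mem {l : Set S} (hl : l ∈ 𝓛) : SingularSet 𝓛 l :=
  fun _ hu _ hv => collin_of_mem hl hu hv

theorem SingularSet.union {X Y : Set S} (hX : SingularSet 𝓛 X) (hY : SingularSet 𝓛 Y)
    (hXY : ∀ x ∈ X, ∀ y ∈ Y, Collin 𝓛 x y) : SingularSet 𝓛 (X ∪ Y) := by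
  rintro u (hu | hu) v (hv | hv)
  · exact hX u hu v hv
  · exact hXY u hu v hv
  · exact (hXY v hv u hu).symm
  · exact hY u hu v hv

theorem isSubspace_perp (hoa : OneOrAll 𝓛) (a : S) : IsSubspace 𝓛 (perp 𝓛 a) := by
  rintro l hl ⟨b, ⟨hbl, hab⟩, c, ⟨hcl, hac⟩, hbc⟩
  exact hoa.subset_perp hl hbl hcl hbc hab hac

theorem IsSubspace.inter {X Y : Set S} (hX : IsSubspace 𝓛 X) (hY : IsSubspace 𝓛 Y) :
    IsSubspace 𝓛 (X ∩ Y) := by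
  rintro l hl ⟨a, ⟨hal, haX, haY⟩, b, ⟨hbl, hbX, hbY⟩, hab⟩
  exact Set.subset_inter (hX l hl ⟨a, ⟨hal, haX⟩, b, ⟨hbl, hbX⟩, hab⟩)
    (hY l hl ⟨a, ⟨hal, haY⟩, b, ⟨hbl, hbY⟩, hab⟩)

theorem IsSubspace.eq_of_mem_of_not_subset {W l : Set S} (hW : IsSubspace 𝓛 W) (hl : l ∈ 𝓛)
    (hlW : ¬ l ⊆ W) {x y : S} (hx : x ∈ l) (hxW : x ∈ W) (hy : y ∈ l) (hyW : y ∈ W) :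
    x = y :=
  by_contra fun hxy => hlW (hW l hl ⟨x, ⟨hx, hxW⟩, y, ⟨hy, hyW⟩, hxy⟩)

end Basic

section Span

variable {𝓛 : Set (Set S)}

def span (𝓛 : Set (Set S)) (A : Set S) : Set S := ⋂₀ {Y | IsSubspace 𝓛 Y ∧ A ⊆ Y}

theorem isSubspace_span (A : Set S) : IsSubspace 𝓛 (span 𝓛 A) := by
  rintro l hl ⟨a, ⟨hal, haA⟩, b, ⟨hbl, hbA⟩, hab⟩ x hx Y ⟨hY, hAY⟩
  exact hY l hl ⟨a, ⟨hal, haA Y ⟨hY, hAY⟩⟩, b, ⟨hbl, hbA Y ⟨hY, hAY⟩⟩, hab⟩ hx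

theorem subset_span (A : Set S) : A ⊆ span 𝓛 A :=
  fun _ ha _ hY => hY.2 ha

theorem span_subset {A Y : Set S} (hY : IsSubspace 𝓛 Y) (hAY : A ⊆ Y) : span 𝓛 A ⊆ Y :=
  fun _ hx => hx Y ⟨hY, hAY⟩

theorem span_mono {A B : Set S} (hAB : A ⊆ B) : span 𝓛 A ⊆ span 𝓛 B :=
  span_subset (isSubspace_span B) (hAB.trans (subset_span B))

/-- The span lies in `a^⊥` for each `a ∈ A`, so `A ⊆ x^⊥` for each point `x` of the span, and
then the whole span lies in `x^⊥`. -/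
theorem singularSet_span (hoa : OneOrAll 𝓛) {A : Set S} (hA : SingularSet 𝓛 A) :
    SingularSet 𝓛 (span 𝓛 A) := by
  have hAperp : ∀ a ∈ A, span 𝓛 A ⊆ perp 𝓛 a :=
    fun a ha => span_subset (isSubspace_perp hoa a) (hA a ha)
  exact fun x hx => span_subset (isSubspace_perp hoa x) fun a ha => (hAperp a ha hx).symm

end Span

section SingularSubspaces

variable {𝓛 : Set (Set S)}

/-- A singular subspace of projective dimension at least two. -/
def IsSingularOfRankThree (𝓛 : Set (Set S)) (X : Set S) : Prop :=
  SingularSet 𝓛 X ∧ IsSubspace 𝓛 X ∧ ∃ m ∈ 𝓛, m ⊆ X ∧ ∃ p ∈ X, p ∉ m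

theorem IsPlane.isSingularOfRankThree {π : Set S} (hπ : IsPlane 𝓛 π) :
    IsSingularOfRankThree 𝓛 π :=
  let ⟨l, hl, a, hal, haπ, hlπ, hs, hsub, _⟩ := hπ
  ⟨hs, hsub, l, hl, hlπ, a, haπ, hal⟩

theorem IsSingularOfRankThree.exists_not_mem (hp : IsPLS 𝓛) {X k : Set S}
    (hX : IsSingularOfRankThree 𝓛 X) (hk : k ∈ 𝓛) : ∃ c ∈ X, c ∉ k := by
  obtain ⟨-, -, m, hm, hmX, p, hpX, hpm⟩ := hX
  by_contra! h
  exact hpm (hp.eq_of_subset hm hk (fun c hc => h c (hmX hc)) ▸ h p hpX)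

/-- `X ∩ q^⊥` is a subspace, so two points in it suffice: the point of `m` collinear with `q`,
and the point collinear with `q` on a line of `X` joining `p` to another point of `m`; they differ
because `p ∉ m`. -/
theorem exists_line_subset_inter_perp (hp : IsPLS 𝓛) (hoa : OneOrAll 𝓛) {X : Set S}
    (hX : IsSingularOfRankThree 𝓛 X) (q : S) : ∃ n ∈ 𝓛, n ⊆ X ∩ perp 𝓛 q := by
  obtain ⟨hXs, hXsub, m, hm, hmX, p, hpX, hpm⟩ := hX
  obtain ⟨s, hsm, hqs⟩ := hoa.exists_collin hm (hp.nonempty hm) q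
  obtain ⟨b, hbm, hbs⟩ := hp.exists_ne_mem hm s
  have hpb : p ≠ b := fun h => hpm (h ▸ hbm)
  obtain ⟨n', hn', hpn', hbn'⟩ := (hXs p hpX b (hmX hbm)).exists_line hpb
  have hn'X : n' ⊆ X := hXsub n' hn' ⟨p, ⟨hpn', hpX⟩, b, ⟨hbn', hmX hbm⟩, hpb⟩
  obtain ⟨t, htn', hqt⟩ := hoa.exists_collin hn' ⟨p, hpn'⟩ q
  have hts : t ≠ s := by
    rintro rfl
    exact hpm (hp.line_eq hn' hm hbs hbn' hbm htn' hsm ▸ hpn')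
  obtain ⟨n, hn, htn, hsn⟩ := (hXs t (hn'X htn') s (hmX hsm)).exists_line hts
  exact ⟨n, hn, hXsub.inter (isSubspace_perp hoa q) n hn
    ⟨t, ⟨htn, hn'X htn', hqt⟩, s, ⟨hsn, hmX hsm, hqs⟩, hts⟩⟩

theorem exists_line_through (hp : IsPLS 𝓛) {X n : Set S} (hXs : SingularSet 𝓛 X)
    (hXsub : IsSubspace 𝓛 X) (hn : n ∈ 𝓛) (hnX : n ⊆ X) {a : S} (ha : a ∈ X) :
    ∃ m ∈ 𝓛, a ∈ m ∧ m ⊆ X := by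
  by_cases han : a ∈ n
  · exact ⟨n, hn, han, hnX⟩
  obtain ⟨v, hvn, hva⟩ := hp.exists_ne_mem hn a
  obtain ⟨m, hm, ham, hvm⟩ := (hXs a ha v (hnX hvn)).exists_line hva.symm
  exact ⟨m, hm, ham, hXsub m hm ⟨a, ⟨ham, ha⟩, v, ⟨hvm, hnX hvn⟩, hva.symm⟩⟩

theorem exists_isSingularOfRankThree (hrank : RankAtLeast 𝓛 3) :
    ∃ X, IsSingularOfRankThree 𝓛 X := by
  obtain ⟨X, hmono, hX⟩ := hrank
  have h01 : X 0 < X 1 := hmono (by decide)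
  have h12 : X 1 < X 2 := hmono (by decide)
  obtain ⟨p₁, hp₁⟩ := (hX 0).1
  obtain ⟨p₂, hp₂, hp₂0⟩ := Set.exists_of_ssubset h01
  obtain ⟨p₃, hp₃, hp₃1⟩ := Set.exists_of_ssubset h12
  have hp₁₂ : p₁ ≠ p₂ := fun h => hp₂0 (h ▸ hp₁)
  obtain ⟨m, hm, hp₁m, hp₂m⟩ := ((hX 1).2.1 p₁ (h01.le hp₁) p₂ hp₂).exists_line hp₁₂
  have hmX : m ⊆ X 1 := (hX 1).2.2 m hm ⟨p₁, ⟨hp₁m, h01.le hp₁⟩, p₂, ⟨hp₂m, hp₂⟩, hp₁₂⟩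
  exact ⟨X 2, (hX 2).2.1, (hX 2).2.2, m, hm, hmX.trans h12.le, p₃, hp₃, fun h => hp₃1 (hmX h)⟩

theorem exists_mem_line (hp : IsPLS 𝓛) (hoa : OneOrAll 𝓛) (hrank : RankAtLeast 𝓛 3) (x : S) :
    ∃ l ∈ 𝓛, x ∈ l := by
  obtain ⟨X, -, -, m, hm, -, -⟩ := exists_isSingularOfRankThree hrank
  obtain ⟨z, hzm, hxz⟩ := hoa.exists_collin hm (hp.nonempty hm) x
  obtain rfl | hxz' := eq_or_ne x z
  · exact ⟨m, hm, hzm⟩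
  · obtain ⟨l, hl, hxl, -⟩ := hxz.exists_line hxz'
    exact ⟨l, hl, hxl⟩

theorem exists_isSingularOfRankThree_subset_perp (hp : IsPLS 𝓛) (hoa : OneOrAll 𝓛)
    (hrank : RankAtLeast 𝓛 3) (x : S) :
    ∃ Y, IsSingularOfRankThree 𝓛 Y ∧ Y ⊆ perp 𝓛 x := by
  obtain ⟨X, hX⟩ := exists_isSingularOfRankThree hrank
  by_cases hxX : x ∈ X
  · exact ⟨X, hX, hX.1 x hxX⟩
  obtain ⟨n, hn, hnX⟩ := exists_line_subset_inter_perp hp hoa hX x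
  have hsing : SingularSet 𝓛 (n ∪ {x}) :=
    (singularSet_of_mem hn).union (by rintro u rfl v rfl; exact Collin.refl _)
      fun u hu v hv => hv ▸ (hnX hu).2.symm
  have hxY : x ∈ span 𝓛 (n ∪ {x}) := subset_span _ (Or.inr rfl)
  refine ⟨span 𝓛 (n ∪ {x}), ⟨singularSet_span hoa hsing, isSubspace_span _, n, hn,
    Set.subset_union_left.trans (subset_span _), x, hxY, fun h => hxX (hnX h).1⟩,
    singularSet_span hoa hsing x hxY⟩

theorem exists_not_mem_subset_perp (hp : IsPLS 𝓛) (hoa : OneOrAll 𝓛) (hrank : RankAtLeast 𝓛 3)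
    {k : Set S} (hk : k ∈ 𝓛) : ∃ c ∉ k, k ⊆ perp 𝓛 c := by
  obtain ⟨x₁, x₂, hx, hx₁, hx₂⟩ := hp.1 k hk
  obtain ⟨Y, hY, hYx₁⟩ := exists_isSingularOfRankThree_subset_perp hp hoa hrank x₁
  obtain ⟨n, hn, hnY⟩ := exists_line_subset_inter_perp hp hoa hY x₂
  by_cases hnk : n = k
  · subst hnk
    obtain ⟨c, hcY, hcn⟩ := hY.exists_not_mem hp hn
    exact ⟨c, hcn, fun v hv => hY.1 c hcY v (hnY hv).1⟩
  · obtain ⟨c, hcn, hck⟩ := Set.not_subset.1 fun h => hnk (hp.eq_of_subset hn hk h)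
    exact ⟨c, hck, hoa.subset_perp hk hx₁ hx₂ hx (hYx₁ (hnY hcn).1).symm (hnY hcn).2.symm⟩

theorem isPlane_span_union (hp : IsPLS 𝓛) (hoa : OneOrAll 𝓛) {m₁ m₂ : Set S} (hm₁ : m₁ ∈ 𝓛)
    (hm₂ : m₂ ∈ 𝓛) {a : S} (ha₁ : a ∈ m₁) (ha₂ : a ∈ m₂) (hne : m₁ ≠ m₂)
    (hsing : SingularSet 𝓛 (m₁ ∪ m₂)) : IsPlane 𝓛 (span 𝓛 (m₁ ∪ m₂)) := by
  obtain ⟨u, hu, hua⟩ := hp.exists_ne_mem hm₂ a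
  have hum₁ : u ∉ m₁ := fun h => hne (hp.line_eq hm₁ hm₂ hua.symm ha₁ ha₂ h hu)
  refine ⟨m₁, hm₁, u, hum₁, subset_span _ (Or.inr hu),
    Set.subset_union_left.trans (subset_span _), singularSet_span hoa hsing, isSubspace_span _,
    fun Y _ hYsub hm₁Y huY hYπ => hYπ.antisymm (span_subset hYsub (Set.union_subset hm₁Y ?_))⟩
  exact hYsub m₂ hm₂ ⟨a, ⟨ha₂, hm₁Y ha₁⟩, u, ⟨hu, huY⟩, hua.symm⟩

end SingularSubspaces

section Connectivity

variable {𝓛 : Set (Set S)} {W : Set S}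

def ComplAdj (𝓛 : Set (Set S)) (W : Set S) (x y : S) : Prop :=
  Collin 𝓛 x y ∧ x ∉ W ∧ y ∉ W

/-- A point `ρ ∈ W` is collinear with a point `z` of `Λ`; either `z = s`, or `z ∉ W` and the line
`ρ z` carries a second point outside `W`, and both are collinear with `s`. -/
theorem collin_of_forall_collin_not_mem (hthick : Thick 𝓛) (hoa : OneOrAll 𝓛)
    (hW : IsSubspace 𝓛 W) {Λ : Set S} (hΛ : Λ ∈ 𝓛) {p s : S} (hpΛ : p ∈ Λ) (hpW : p ∉ W)
    (hsΛ : s ∈ Λ) (hsW : s ∈ W) (hs : ∀ t ∉ W, Collin 𝓛 s t) (ρ : S) : Collin 𝓛 s ρ := by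
  by_cases hρW : ρ ∉ W
  · exact hs ρ hρW
  push Not at hρW
  obtain ⟨z, hzΛ, hρz⟩ := hoa.exists_collin hΛ ⟨p, hpΛ⟩ ρ
  by_cases hzW : z ∈ W
  · rw [hW.eq_of_mem_of_not_subset hΛ (fun h => hpW (h hpΛ)) hzΛ hzW hsΛ hsW] at hρz
    exact hρz.symm
  obtain ⟨N, hN, hρN, hzN⟩ := hρz.exists_line fun h => hzW (h ▸ hρW)
  obtain ⟨τ, hτN, hτz, hτρ⟩ := hthick.exists_ne_ne hN z ρ
  have hτW : τ ∉ W := fun hτW => hzW (hW N hN ⟨τ, ⟨hτN, hτW⟩, ρ, ⟨hρN, hρW⟩, hτρ⟩ hzN)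
  exact hoa.subset_perp hN hzN hτN hτz.symm (hs z hzW) (hs τ hτW) hρN

/-- Otherwise let `C` be the component of `p`. A point collinear with a point of `C` and with a
point outside `C ∪ W` lies in `W`. This yields a point `s ∈ W` on a line through `p` that is
collinear with `q`, and then with every point outside `W`, contradicting nondegeneracy. -/
theorem reflTransGen_complAdj (hthick : Thick 𝓛) (hoa : OneOrAll 𝓛) (hnd : Nondegenerate 𝓛)
    (hW : IsSubspace 𝓛 W) {p q : S} (hpl : ∃ l ∈ 𝓛, p ∈ l) (hpW : p ∉ W) (hqW : q ∉ W) :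
    Relation.ReflTransGen (ComplAdj 𝓛 W) p q := by
  by_contra hpq
  set C := {t | Relation.ReflTransGen (ComplAdj 𝓛 W) p t}
  have hCW : ∀ t ∈ C, t ∉ W := fun t ht => by
    induction ht with
    | refl => exact hpW
    | tail _ h _ => exact h.2.2
  have hsep : ∀ t ∈ C, ∀ t' ∉ C, t' ∉ W → ∀ c, Collin 𝓛 c t → Collin 𝓛 c t' → c ∈ W :=
    fun t ht t' ht' ht'W c hct hct' => by_contra fun hcW =>
      ht' ((ht.tail ⟨hct.symm, hCW t ht, hcW⟩).tail ⟨hct', hcW, ht'W⟩)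
  obtain ⟨Λ, hΛ, hpΛ⟩ := hpl
  have hΛW : ¬ Λ ⊆ W := fun h => hpW (h hpΛ)
  obtain ⟨s, hsΛ, hqs⟩ := hoa.exists_collin hΛ ⟨p, hpΛ⟩ q
  have hsW : s ∈ W := hsep p .refl q hpq hqW s (collin_of_mem hΛ hsΛ hpΛ) hqs.symm
  obtain ⟨M, hM, hqM, hsM⟩ := hqs.exists_line fun h => hqW (h ▸ hsW)
  have hMW : ¬ M ⊆ W := fun h => hqW (h hqM)
  have hs : ∀ t ∉ W, Collin 𝓛 s t := by
    intro t htW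
    by_cases htC : t ∈ C
    · obtain ⟨z, hzM, htz⟩ := hoa.exists_collin hM ⟨q, hqM⟩ t
      have hzW := hsep t htC q hpq hqW z htz.symm (collin_of_mem hM hzM hqM)
      rw [hW.eq_of_mem_of_not_subset hM hMW hzM hzW hsM hsW] at htz
      exact htz.symm
    · obtain ⟨z, hzΛ, htz⟩ := hoa.exists_collin hΛ ⟨p, hpΛ⟩ t
      have hzW := hsep p .refl t htC htW z (collin_of_mem hΛ hzΛ hpΛ) htz.symm
      rw [hW.eq_of_mem_of_not_subset hΛ hΛW hzΛ hzW hsΛ hsW] at htz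
      exact htz.symm
  obtain ⟨z, hz⟩ := hnd s
  exact hz (collin_of_forall_collin_not_mem hthick hoa hW hΛ hpΛ hpW hsΛ hsW hs z)

theorem eq_univ_of_meets_every_line (hthick : Thick 𝓛) (hoa : OneOrAll 𝓛)
    (hnd : Nondegenerate 𝓛) (hcover : ∀ x, ∃ l ∈ 𝓛, x ∈ l) {Y X : Set S}
    (hY : IsSubspace 𝓛 Y) (hYmeet : ∀ l ∈ 𝓛, (l ∩ Y).Nonempty) (hX : IsSubspace 𝓛 X)
    (hYX : Y ⊆ X) {t : S} (htX : t ∈ X) (htY : t ∉ Y) : X = Set.univ := by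
  refine Set.eq_univ_of_forall fun s => ?_
  by_cases hsY : s ∈ Y
  · exact hYX hsY
  refine Relation.ReflTransGen.head_induction_on
    (reflTransGen_complAdj hthick hoa hnd hY (hcover s) hsY htY) htX ?_
  rintro x c ⟨hxc, -, hcY⟩ - hcX
  obtain rfl | hne := eq_or_ne x c
  · exact hcX
  obtain ⟨l, hl, hxl, hcl⟩ := hxc.exists_line hne
  obtain ⟨w, hwl, hwY⟩ := hYmeet l hl
  exact hX l hl ⟨w, ⟨hwl, hYX hwY⟩, c, ⟨hcl, hcX⟩, fun h => hcY (h ▸ hwY)⟩ hxl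

/-- `a^⊥` meets every line, so it is a maximal subspace: `a^⊥ ⊆ w^⊥` forces equality, as
`w^⊥ ≠ S`. With `w` the point of the line `a u` collinear with some `z ∉ a^⊥`, the
assumption `a^⊥ ⊆ u^⊥` gives `a^⊥ ⊆ w^⊥ ∋ z`. -/
theorem not_perp_subset_perp (hthick : Thick 𝓛) (hoa : OneOrAll 𝓛) (hnd : Nondegenerate 𝓛)
    (hcover : ∀ x, ∃ l ∈ 𝓛, x ∈ l) {a u : S} (hau : a ≠ u) (hco : Collin 𝓛 a u) :
    ¬ perp 𝓛 a ⊆ perp 𝓛 u := by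
  intro hsub
  have hmeet : ∀ l ∈ 𝓛, (l ∩ perp 𝓛 a).Nonempty := fun l hl =>
    let ⟨z, hz, haz⟩ := hoa.exists_collin hl (hthick.nonempty hl) a
    ⟨z, hz, haz⟩
  have hmax : ∀ w, perp 𝓛 a ⊆ perp 𝓛 w → perp 𝓛 w ⊆ perp 𝓛 a := fun w hw t ht =>
    by_contra fun hta =>
      let ⟨z, hz⟩ := hnd w
      hz (Set.eq_univ_iff_forall.1 (eq_univ_of_meets_every_line hthick hoa hnd hcover
        (isSubspace_perp hoa a) hmeet (isSubspace_perp hoa w) hw ht hta) z)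
  obtain ⟨z, hz⟩ := hnd a
  obtain ⟨m, hm, ham, hum⟩ := hco.exists_line hau
  obtain ⟨w, hwm, hzw⟩ := hoa.exists_collin hm ⟨a, ham⟩ z
  have hw : perp 𝓛 a ⊆ perp 𝓛 w := fun v hv =>
    (hoa.subset_perp hm ham hum hau (hv : Collin 𝓛 a v).symm (hsub hv).symm hwm).symm
  exact hz (hmax w hw hzw.symm)

end Connectivity

theorem inf_ne_bot_iff_finrank_sup_le_three {K V : Type*} [DivisionRing K] [AddCommGroup V]
    [Module K V] {A B : Submodule K V} [FiniteDimensional K A] [FiniteDimensional K B]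
    (hA : Module.finrank K A = 2) (hB : Module.finrank K B = 2) :
    A ⊓ B ≠ ⊥ ↔ Module.finrank K ↥(A ⊔ B) ≤ 3 := by
  have := Submodule.finrank_sup_add_finrank_inf_eq A B
  rw [Ne, ← Submodule.finrank_eq_zero]
  omega

namespace EmbeddingWitness

variable {𝓛 : Set (Set S)}

instance (E : EmbeddingWitness 𝓛) : DivisionRing E.F := E.iF

instance (E : EmbeddingWitness 𝓛) : AddCommGroup E.V := E.iV

instance (E : EmbeddingWitness 𝓛) : Module E.F E.V := E.iM

variable (E : EmbeddingWitness 𝓛)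

def IsLineSubmodule (l : Set S) (U : Submodule E.F E.V) : Prop :=
  Module.finrank E.F U = 2 ∧
    E.f '' l = {p | ∃ v : E.V, ∃ hv : v ≠ 0, v ∈ U ∧ p = Projectivization.mk E.F v hv}

def pullback (T : Submodule E.F E.V) : Set S := {s | (E.f s).submodule ≤ T}

variable {E} {l : Set S} {U : Submodule E.F E.V}

theorem IsLineSubmodule.finiteDimensional (hU : E.IsLineSubmodule l U) :
    FiniteDimensional E.F U :=
  Module.finite_of_finrank_eq_succ hU.1

theorem IsLineSubmodule.submodule_le (hU : E.IsLineSubmodule l U) {s : S} (hs : s ∈ l) :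
    (E.f s).submodule ≤ U := by
  obtain ⟨v, hv, hvU, hfs⟩ : E.f s ∈ {p | ∃ v : E.V, ∃ hv : v ≠ 0, v ∈ U ∧
      p = Projectivization.mk E.F v hv} := hU.2 ▸ Set.mem_image_of_mem E.f hs
  rw [hfs, Projectivization.submodule_mk, Submodule.span_singleton_le_iff_mem]
  exact hvU

theorem IsLineSubmodule.le_of_mem_pullback (hU : E.IsLineSubmodule l U) {s t : S} (hs : s ∈ l)
    (ht : t ∈ l) (hst : s ≠ t) {T : Submodule E.F E.V} (hsT : s ∈ E.pullback T)
    (htT : t ∈ E.pullback T) : U ≤ T := by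
  have hmem : ∀ x ∈ l, Projectivization.mk E.F (E.f x).rep (E.f x).rep_nonzero ∈
      U.projectivization := fun x hx => by
    rw [Projectivization.mk_rep, Submodule.mem_projectivization_iff_submodule_le]
    exact hU.submodule_le hx
  have hrep : ∀ x ∈ E.pullback T, (E.f x).rep ∈ T := fun x hx =>
    hx (by rw [Projectivization.submodule_eq]; exact Submodule.mem_span_singleton_self _)
  rw [Projectivization.line_unique' _ _ (Projectivization.linearIndependent_pair_iff_ne.2
    (E.inj.ne hst)) U hU.1 (hmem s hs) (hmem t ht), Submodule.span_le]
  rintro v (rfl | rfl)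
  exacts [hrep s hsT, hrep t htT]

theorem isSubspace_pullback (T : Submodule E.F E.V) : IsSubspace 𝓛 (E.pullback T) := by
  rintro l hl ⟨s, ⟨hs, hsT⟩, t, ⟨ht, htT⟩, hst⟩ e he
  obtain ⟨U, hU⟩ : ∃ U, E.IsLineSubmodule l U := E.lines2dim l hl
  exact (hU.submodule_le he).trans (hU.le_of_mem_pullback hs ht hst hsT htT)

theorem IsLineSubmodule.le_of_subset_pullback (hp : IsPLS 𝓛) (hl : l ∈ 𝓛)
    (hU : E.IsLineSubmodule l U) {T : Submodule E.F E.V} (hlT : l ⊆ E.pullback T) : U ≤ T :=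
  let ⟨_, _, hst, hs, ht⟩ := hp.1 l hl
  hU.le_of_mem_pullback hs ht hst (hlT hs) (hlT ht)

end EmbeddingWitness

section Embedded

variable {𝓛 : Set (Set S)}

/-- The span of `m₁ ∪ m₂` maps into the projective plane of `U₁ ⊔ U₂`, and two projective lines
of a projective plane meet. -/
theorem inter_nonempty_of_subset_span (hemb : Embeddable 𝓛) (hp : IsPLS 𝓛)
    {m₁ m₂ l₁ l₂ : Set S} (hm₁ : m₁ ∈ 𝓛) (hm₂ : m₂ ∈ 𝓛) (hl₁ : l₁ ∈ 𝓛) (hl₂ : l₂ ∈ 𝓛) {a : S}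
    (ha₁ : a ∈ m₁) (ha₂ : a ∈ m₂) (h₁ : l₁ ⊆ span 𝓛 (m₁ ∪ m₂)) (h₂ : l₂ ⊆ span 𝓛 (m₁ ∪ m₂)) :
    (l₁ ∩ l₂).Nonempty := by
  obtain ⟨E⟩ := hemb
  obtain ⟨U₁, hU₁⟩ : ∃ U, E.IsLineSubmodule m₁ U := E.lines2dim m₁ hm₁
  obtain ⟨U₂, hU₂⟩ : ∃ U, E.IsLineSubmodule m₂ U := E.lines2dim m₂ hm₂
  obtain ⟨V₁, hV₁⟩ : ∃ U, E.IsLineSubmodule l₁ U := E.lines2dim l₁ hl₁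
  obtain ⟨V₂, hV₂⟩ : ∃ U, E.IsLineSubmodule l₂ U := E.lines2dim l₂ hl₂
  have := hU₁.finiteDimensional
  have := hU₂.finiteDimensional
  have := hV₁.finiteDimensional
  have := hV₂.finiteDimensional
  have hπ : span 𝓛 (m₁ ∪ m₂) ⊆ E.pullback (U₁ ⊔ U₂) :=
    span_subset (E.isSubspace_pullback _) (Set.union_subset
      (fun s hs => (hU₁.submodule_le hs).trans le_sup_left)
      (fun s hs => (hU₂.submodule_le hs).trans le_sup_right))
  have hU : U₁ ⊓ U₂ ≠ ⊥ := by
    refine ne_bot_of_le_ne_bot ?_ (le_inf (hU₁.submodule_le ha₁) (hU₂.submodule_le ha₂))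
    rw [Ne, ← Submodule.finrank_eq_zero, Projectivization.finrank_submodule]
    exact one_ne_zero
  have hV : V₁ ⊓ V₂ ≠ ⊥ := by
    rw [inf_ne_bot_iff_finrank_sup_le_three hU₁.1 hU₂.1] at hU
    rw [inf_ne_bot_iff_finrank_sup_le_three hV₁.1 hV₂.1]
    exact (Submodule.finrank_mono (sup_le (hV₁.le_of_subset_pullback hp hl₁ (h₁.trans hπ))
      (hV₂.le_of_subset_pullback hp hl₂ (h₂.trans hπ)))).trans hU
  obtain ⟨x, ⟨hx₁, hx₂⟩, hx⟩ := (Submodule.ne_bot_iff _).1 hV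
  obtain ⟨s₁, hs₁, hfs₁⟩ : Projectivization.mk E.F x hx ∈ E.f '' l₁ :=
    hV₁.2 ▸ ⟨x, hx, hx₁, rfl⟩
  obtain ⟨s₂, hs₂, hfs₂⟩ : Projectivization.mk E.F x hx ∈ E.f '' l₂ :=
    hV₂.2 ▸ ⟨x, hx, hx₂, rfl⟩
  exact ⟨s₁, hs₁, E.inj (hfs₁.trans hfs₂.symm) ▸ hs₂⟩

/-- A point `t` of the plane lies on the line through `t` and a point `v ∈ c \ d`, which meets
`d`. -/
theorem span_union_subset_span_union (hemb : Embeddable 𝓛) (hp : IsPLS 𝓛) (hoa : OneOrAll 𝓛)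
    {m₁ m₂ c d : Set S} (hm₁ : m₁ ∈ 𝓛) (hm₂ : m₂ ∈ 𝓛) {a : S} (ha₁ : a ∈ m₁) (ha₂ : a ∈ m₂)
    (hsing : SingularSet 𝓛 (m₁ ∪ m₂)) (hc : c ∈ 𝓛) (hd : d ∈ 𝓛) (hcd : c ≠ d)
    (hcπ : c ⊆ span 𝓛 (m₁ ∪ m₂)) (hdπ : d ⊆ span 𝓛 (m₁ ∪ m₂)) :
    span 𝓛 (m₁ ∪ m₂) ⊆ span 𝓛 (c ∪ d) := by
  obtain ⟨v, hvc, hvd⟩ := Set.not_subset.1 fun h => hcd (hp.eq_of_subset hc hd h)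
  have hv : v ∈ span 𝓛 (c ∪ d) := subset_span _ (Or.inl hvc)
  intro t ht
  by_cases htd : t ∈ d
  · exact subset_span _ (Or.inr htd)
  obtain rfl | htv := eq_or_ne t v
  · exact hv
  obtain ⟨ℓ, hℓ, htℓ, hvℓ⟩ := (singularSet_span hoa hsing t ht v (hcπ hvc)).exists_line htv
  have hℓπ : ℓ ⊆ span 𝓛 (m₁ ∪ m₂) :=
    isSubspace_span _ ℓ hℓ ⟨t, ⟨htℓ, ht⟩, v, ⟨hvℓ, hcπ hvc⟩, htv⟩
  obtain ⟨r, hrℓ, hrd⟩ := inter_nonempty_of_subset_span hemb hp hm₁ hm₂ hℓ hd ha₁ ha₂ hℓπ hdπ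
  exact isSubspace_span _ ℓ hℓ
    ⟨r, ⟨hrℓ, subset_span _ (Or.inr hrd)⟩, v, ⟨hvℓ, hv⟩, fun h => hvd (h ▸ hrd)⟩ htℓ

end Embedded

section Residue

variable {𝓛 : Set (Set S)} {a : S}

def linesThrough (𝓛 : Set (Set S)) (a : S) : Set (Set S) := {m | m ∈ 𝓛 ∧ a ∈ m}

/-- The lines of the residue at `a`: for each plane on `a`, spanned by two lines `m₁, m₂`
through `a`, the pencil of lines through `a` inside it. -/
def residue (𝓛 : Set (Set S)) (a : S) : Set (Set (linesThrough 𝓛 a)) :=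
  {Λ | ∃ m₁ m₂ : linesThrough 𝓛 a, m₁ ≠ m₂ ∧ SingularSet 𝓛 (m₁.1 ∪ m₂.1) ∧
    Λ = {m | m.1 ⊆ span 𝓛 (m₁.1 ∪ m₂.1)}}

theorem eq_of_mem_linesThrough (hp : IsPLS 𝓛) {m₁ m₂ : linesThrough 𝓛 a} (hne : m₁ ≠ m₂)
    {v : S} (hv₁ : v ∈ m₁.1) (hv₂ : v ∈ m₂.1) : v = a :=
  by_contra fun hva => hne (Subtype.ext (hp.line_eq m₁.2.1 m₂.2.1 hva hv₁ hv₂ m₁.2.2 m₂.2.2))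

theorem collin_residue_iff (hoa : OneOrAll 𝓛) {x y : linesThrough 𝓛 a} :
    Collin (residue 𝓛 a) x y ↔ SingularSet 𝓛 (x.1 ∪ y.1) := by
  constructor
  · rintro (rfl | ⟨Λ, ⟨m₁, m₂, -, hsing, rfl⟩, hx, hy⟩)
    · rw [Set.union_self]
      exact singularSet_of_mem x.2.1
    · exact (singularSet_span hoa hsing).mono (Set.union_subset hx hy)
  · intro hsing
    by_cases hxy : x = y
    · exact Or.inl hxy
    exact Or.inr ⟨_, ⟨x, y, hxy, hsing, rfl⟩, Set.subset_union_left.trans (subset_span _),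
      Set.subset_union_right.trans (subset_span _)⟩

theorem isPlane_of_mem_residue (hp : IsPLS 𝓛) (hoa : OneOrAll 𝓛) {Λ : Set (linesThrough 𝓛 a)}
    (hΛ : Λ ∈ residue 𝓛 a) : ∃ π, IsPlane 𝓛 π ∧ a ∈ π ∧ ∀ m ∈ Λ, m.1 ⊆ π := by
  obtain ⟨m₁, m₂, hne, hsing, rfl⟩ := hΛ
  exact ⟨_, isPlane_span_union hp hoa m₁.2.1 m₂.2.1 m₁.2.2 m₂.2.2
    (fun h => hne (Subtype.ext h)) hsing, subset_span _ (Or.inl m₁.2.2), fun m hm => hm⟩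

theorem exists_mem_residue (hp : IsPLS 𝓛) (hoa : OneOrAll 𝓛) (hrank : RankAtLeast 𝓛 3)
    (k : linesThrough 𝓛 a) : ∃ Λ ∈ residue 𝓛 a, k ∈ Λ := by
  obtain ⟨c, hck, hkc⟩ := exists_not_mem_subset_perp hp hoa hrank k.2.1
  have hac : a ≠ c := fun h => hck (h ▸ k.2.2)
  obtain ⟨m, hm, ham, hcm⟩ := (hkc k.2.2).symm.exists_line hac
  have hsing : SingularSet 𝓛 (k.1 ∪ m) :=
    (singularSet_of_mem k.2.1).union (singularSet_of_mem hm) fun u hu v hv =>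
      hoa.subset_perp hm ham hcm hac (collin_of_mem k.2.1 hu k.2.2) (hkc hu).symm hv
  exact ⟨_, ⟨k, ⟨m, hm, ham⟩, fun h => hck (congrArg Subtype.val h ▸ hcm), hsing, rfl⟩,
    Set.subset_union_left.trans (subset_span _)⟩

/-- The third line is the line through `a` and a third point of a line joining `m₁` to `m₂`. -/
theorem thick_residue (hp : IsPLS 𝓛) (hoa : OneOrAll 𝓛) (hthick : Thick 𝓛) :
    Thick (residue 𝓛 a) := by
  rintro Λ ⟨m₁, m₂, hne, hsing, rfl⟩
  have hπ := singularSet_span hoa hsing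
  have hπsub : IsSubspace 𝓛 (span 𝓛 (m₁.1 ∪ m₂.1)) := isSubspace_span _
  have h₁π : m₁.1 ⊆ span 𝓛 (m₁.1 ∪ m₂.1) := Set.subset_union_left.trans (subset_span _)
  have h₂π : m₂.1 ⊆ span 𝓛 (m₁.1 ∪ m₂.1) := Set.subset_union_right.trans (subset_span _)
  obtain ⟨v, hv, hva⟩ := hp.exists_ne_mem m₁.2.1 a
  obtain ⟨u, hu, hua⟩ := hp.exists_ne_mem m₂.2.1 a
  have hvu : v ≠ u := fun h => hva (eq_of_mem_linesThrough hp hne hv (h ▸ hu))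
  obtain ⟨ℓ, hℓ, hvℓ, huℓ⟩ := (hsing v (Or.inl hv) u (Or.inr hu)).exists_line hvu
  obtain ⟨w, hwℓ, hwv, hwu⟩ := hthick.exists_ne_ne hℓ v u
  have hw₁ : w ∉ m₁.1 := fun hw =>
    hua (eq_of_mem_linesThrough hp hne (hp.line_eq hℓ m₁.2.1 hwv hwℓ hw hvℓ hv ▸ huℓ) hu)
  have hw₂ : w ∉ m₂.1 := fun hw =>
    hva (eq_of_mem_linesThrough hp hne hv (hp.line_eq hℓ m₂.2.1 hwu hwℓ hw huℓ hu ▸ hvℓ))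
  have hwa : a ≠ w := fun h => hw₁ (h ▸ m₁.2.2)
  have hwπ : w ∈ span 𝓛 (m₁.1 ∪ m₂.1) :=
    hπsub ℓ hℓ ⟨v, ⟨hvℓ, h₁π hv⟩, u, ⟨huℓ, h₂π hu⟩, hvu⟩ hwℓ
  obtain ⟨z, hz, haz, hwz⟩ := (hπ a (h₁π m₁.2.2) w hwπ).exists_line hwa
  refine ⟨m₁, m₂, ⟨z, hz, haz⟩, hne, fun h => hw₁ ?_, fun h => hw₂ ?_, h₁π, h₂π,
    hπsub z hz ⟨a, ⟨haz, h₁π m₁.2.2⟩, w, ⟨hwz, hwπ⟩, hwa⟩⟩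
  · rwa [h]
  · rwa [h]

/-- `x` meets some line `z` of the plane through `a` inside `x₀^⊥`, for a point `x₀ ≠ a` of `x`;
and if `x` is adjacent to two lines of a plane, it is adjacent to the whole plane, since these two
lines span it. -/
theorem oneOrAll_residue (hp : IsPLS 𝓛) (hoa : OneOrAll 𝓛) (hemb : Embeddable 𝓛) :
    OneOrAll (residue 𝓛 a) := by
  refine oneOrAll_of_forall ?_ ?_
  · rintro Λ ⟨m₁, m₂, hne, hsing, rfl⟩ x
    obtain ⟨x₀, hx₀, hx₀a⟩ := hp.exists_ne_mem x.2.1 a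
    have hπ := (isPlane_span_union hp hoa m₁.2.1 m₂.2.1 m₁.2.2 m₂.2.2
      (fun h => hne (Subtype.ext h)) hsing).isSingularOfRankThree
    obtain ⟨n, hn, hnπ⟩ := exists_line_subset_inter_perp hp hoa hπ x₀
    obtain ⟨z, hz, haz, hzπ⟩ := exists_line_through hp (hπ.1.mono Set.inter_subset_left)
      (hπ.2.1.inter (isSubspace_perp hoa x₀)) hn hnπ
      ⟨subset_span _ (Or.inl m₁.2.2), collin_of_mem x.2.1 hx₀ x.2.2⟩
    refine ⟨⟨z, hz, haz⟩, fun t ht => (hzπ ht).1, (collin_residue_iff hoa).2 ?_⟩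
    exact (singularSet_of_mem x.2.1).union (singularSet_of_mem hz) fun u hu v hv =>
      (hoa.subset_perp x.2.1 x.2.2 hx₀ hx₀a.symm (collin_of_mem hz hv haz) (hzπ hv).2.symm hu).symm
  · rintro Λ ⟨m₁, m₂, hne, hsing, rfl⟩ x c d hc hd hcd hxc hxd e he
    rw [collin_residue_iff hoa] at hxc hxd
    show Collin (residue 𝓛 a) x e
    rw [collin_residue_iff hoa]
    have hπ := span_union_subset_span_union hemb hp hoa m₁.2.1 m₂.2.1 m₁.2.2 m₂.2.2 hsing c.2.1
      d.2.1 (fun h => hcd (Subtype.ext h)) hc hd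
    have hxcd : SingularSet 𝓛 (x.1 ∪ (c.1 ∪ d.1)) :=
      (singularSet_of_mem x.2.1).union ((singularSet_span hoa hsing).mono (Set.union_subset hc hd))
        fun u hu v hv => hv.elim (hxc u (Or.inl hu) v ∘ Or.inr) (hxd u (Or.inl hu) v ∘ Or.inr)
    refine (singularSet_span hoa hxcd).mono (Set.union_subset
      (Set.subset_union_left.trans (subset_span _)) ?_)
    exact (he.trans hπ).trans (span_mono Set.subset_union_right)

theorem nondegenerate_residue (hp : IsPLS 𝓛) (hoa : OneOrAll 𝓛) (hthick : Thick 𝓛)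
    (hnd : Nondegenerate 𝓛) (hcover : ∀ x, ∃ l ∈ 𝓛, x ∈ l) : Nondegenerate (residue 𝓛 a) := by
  intro x
  by_contra! h
  obtain ⟨u, hu, hua⟩ := hp.exists_ne_mem x.2.1 a
  refine not_perp_subset_perp hthick hoa hnd hcover hua.symm (collin_of_mem x.2.1 x.2.2 hu)
    fun v (hav : Collin 𝓛 a v) => ?_
  obtain rfl | hva := eq_or_ne a v
  · exact collin_of_mem x.2.1 hu x.2.2
  obtain ⟨z, hz, haz, hvz⟩ := hav.exists_line hva
  exact (collin_residue_iff hoa).1 (h ⟨z, hz, haz⟩) u (Or.inl hu) v (Or.inr hvz)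

theorem isSubspace_residue (hp : IsPLS 𝓛) (hoa : OneOrAll 𝓛) (hemb : Embeddable 𝓛) {W : Set S}
    (hW : IsSubspace 𝓛 W) : IsSubspace (residue 𝓛 a) {m | m.1 ⊆ W} := by
  rintro Λ ⟨m₁, m₂, hne, hsing, rfl⟩ ⟨c, ⟨hc, hcW⟩, d, ⟨hd, hdW⟩, hcd⟩ e he
  exact he.trans ((span_union_subset_span_union hemb hp hoa m₁.2.1 m₂.2.1 m₁.2.2 m₂.2.2 hsing
    c.2.1 d.2.1 (fun h => hcd (Subtype.ext h)) hc hd).trans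
    (span_subset hW (Set.union_subset hcW hdW)))

theorem exists_plane_chain (hp : IsPLS 𝓛) (hoa : OneOrAll 𝓛) {W : Set S}
    {k l : linesThrough 𝓛 a} (hk : ∃ Λ ∈ residue 𝓛 a, k ∈ Λ) (hkW : ¬ k.1 ⊆ W)
    (hkl : Relation.ReflTransGen (ComplAdj (residue 𝓛 a) {m | m.1 ⊆ W}) k l) :
    ∃ n : ℕ, ∃ Pl : Fin (n + 1) → Set S,
      (∀ i, IsPlane 𝓛 (Pl i) ∧ ¬ Pl i ⊆ W ∧ a ∈ Pl i) ∧ k.1 ⊆ Pl 0 ∧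
      l.1 ⊆ Pl (Fin.last n) ∧
      ∀ j : Fin n, ∃ M ∈ compLines 𝓛 W, M ⊆ Pl j.castSucc \ W ∧ M ⊆ Pl j.succ \ W := by
  induction hkl with
  | refl =>
    obtain ⟨Λ, hΛ, hkΛ⟩ := hk
    obtain ⟨π, hπ, haπ, hΛπ⟩ := isPlane_of_mem_residue hp hoa hΛ
    exact ⟨0, fun _ => π, fun _ => ⟨hπ, fun h => hkW ((hΛπ k hkΛ).trans h), haπ⟩, hΛπ k hkΛ,
      hΛπ k hkΛ, fun j => j.elim0⟩
  | @tail x y _ hxy ih =>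
    obtain ⟨n, Pl, hPl, hk0, hxn, hchain⟩ := ih
    obtain ⟨hxy | ⟨Λ, hΛ, hxΛ, hyΛ⟩, hxW, -⟩ := hxy
    · exact ⟨n, Pl, hPl, hk0, hxy ▸ hxn, hchain⟩
    obtain ⟨π, hπ, haπ, hΛπ⟩ := isPlane_of_mem_residue hp hoa hΛ
    refine ⟨n + 1, Fin.snoc Pl π, fun i => ?_, ?_, ?_, fun j => ?_⟩
    · induction i using Fin.lastCases with
      | last =>
        rw [Fin.snoc_last]
        exact ⟨hπ, fun h => hxW ((hΛπ x hxΛ).trans h), haπ⟩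
      | cast i =>
        rw [Fin.snoc_castSucc]
        exact hPl i
    · rw [← Fin.castSucc_zero, Fin.snoc_castSucc]
      exact hk0
    · rw [Fin.snoc_last]
      exact hΛπ y hyΛ
    · induction j using Fin.lastCases with
      | last =>
        rw [Fin.succ_last, Fin.snoc_last, Fin.snoc_castSucc]
        exact ⟨x.1 \ W, ⟨x.1, x.2.1, hxW, rfl⟩, Set.sdiff_subset_sdiff_left hxn,
          Set.sdiff_subset_sdiff_left (hΛπ x hxΛ)⟩
      | cast j =>
        rw [Fin.succ_castSucc, Fin.snoc_castSucc, Fin.snoc_castSucc]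
        exact hchain j

end Residue

theorem statement_6_general (𝓛 : Set (Set S)) (hpolar : IsPolarSpace 𝓛) (hthick : Thick 𝓛)
    (hnd : Nondegenerate 𝓛) (hrank : RankAtLeast 𝓛 3) (hemb : Embeddable 𝓛)
    (W : Set S) (hsub : IsSubspace 𝓛 W)
    (K L : Set S) (hpar : Parallel 𝓛 W K L) :
    ∃ a : S, AtInfinity 𝓛 W K a ∧ AtInfinity 𝓛 W L a ∧
      ∃ n : ℕ, ∃ Pl : Fin (n + 1) → Set S,
        (∀ i, IsPlane 𝓛 (Pl i) ∧ ¬ Pl i ⊆ W ∧ a ∈ Pl i) ∧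
        K ⊆ Pl 0 \ W ∧ L ⊆ Pl (Fin.last n) \ W ∧
        ∀ j : Fin n, ∃ M ∈ compLines 𝓛 W,
          M ⊆ Pl j.castSucc \ W ∧ M ⊆ Pl j.succ \ W := by
  obtain ⟨hp, hoa⟩ := hpolar
  obtain ⟨k, hk, l, hl, hkW, hlW, rfl, rfl, a, ⟨hak, hal⟩, haW⟩ := hpar
  have hkΛ := exists_mem_residue hp hoa hrank (⟨k, hk, hak⟩ : linesThrough 𝓛 a)
  have hkl : Relation.ReflTransGen (ComplAdj (residue 𝓛 a) {m | m.1 ⊆ W})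
      ⟨k, hk, hak⟩ ⟨l, hl, hal⟩ :=
    reflTransGen_complAdj (thick_residue hp hoa hthick) (oneOrAll_residue hp hoa hemb)
      (nondegenerate_residue hp hoa hthick hnd (exists_mem_line hp hoa hrank))
      (isSubspace_residue hp hoa hemb hsub) hkΛ hkW hlW
  obtain ⟨n, Pl, hPl, hk0, hln, hchain⟩ := exists_plane_chain hp hoa hkΛ hkW hkl
  exact ⟨a, ⟨k, hk, hkW, rfl, hak, haW⟩, ⟨l, hl, hlW, rfl, hal, haW⟩, n, Pl, hPl,
    Set.sdiff_subset_sdiff_left hk0, Set.sdiff_subset_sdiff_left hln, hchain⟩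

theorem statement_6 (𝓛 : Set (Set S)) (hpolar : IsPolarSpace 𝓛) (hthick : Thick 𝓛)
    (hnd : Nondegenerate 𝓛) (hrank : RankAtLeast 𝓛 3) (hemb : Embeddable 𝓛)
    (W : Set S) (hsub : IsSubspace 𝓛 W) (hproper : W ≠ Set.univ)
    (hhyp : ∃ H : Set S, IsHyperplane 𝓛 H ∧ W ⊆ H)
    (K L : Set S) (hK : K ∈ compLines 𝓛 W) (hL : L ∈ compLines 𝓛 W)
    (hne : K ≠ L) (hpar : Parallel 𝓛 W K L) :
    ∃ a : S, AtInfinity 𝓛 W K a ∧ AtInfinity 𝓛 W L a ∧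
      ∃ n : ℕ, ∃ Pl : Fin (n + 1) → Set S,
        (∀ i, IsPlane 𝓛 (Pl i) ∧ ¬ Pl i ⊆ W ∧ a ∈ Pl i) ∧
        K ⊆ Pl 0 \ W ∧ L ⊆ Pl (Fin.last n) \ W ∧
        ∀ j : Fin n, ∃ M ∈ compLines 𝓛 W,
          M ⊆ Pl j.castSucc \ W ∧ M ⊆ Pl j.succ \ W :=
  statement_6_general 𝓛 hpolar hthick hnd hrank hemb W hsub K L hpar

end PolarComp
end

section
/- Let P = (S, 𝓛) be a thick nondegenerate polar space of rank at least 3 and let W be a proper subspace of P that is contained in some hyperplane of P but is not itself a hyperplane. Then the map sending each parallel class [L] of affine lines of D(P, W) to the point L^∞ is a well-defined bijection from the set of parallel classes of affine lines onto W. -/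
namespace PolarComp

variable {S : Type*}

/-! The closure of a proper line `K` of `D(P, W)` is unique, since thickness leaves two points of
`K̄` outside `W` and two lines share at most one point; and `K̄ ⊄ W` meets the subspace `W` in at
most one point. Hence `K^∞` is well defined and parallelism is equality of points at infinity.
Surjectivity: as `W` is not a hyperplane, some line `l` misses `W`; by one-or-all, a point
`w ∈ W` is collinear with some `b ∈ l`, and the line `wb` is affine with point at infinity `w`. -/

section Complement

variable {𝓛 : Set (Set S)} {W : Set S}

theorem inter_subsingleton_of_not_subset (hW : IsSubspace 𝓛 W) {k : Set S} (hk : k ∈ 𝓛)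
    (hkW : ¬ k ⊆ W) : (k ∩ W).Subsingleton := fun a ha b hb =>
  by_contra fun hab => hkW (hW k hk ⟨a, ha, b, hb, hab⟩)

theorem exists_ne_mem_diff (hthick : Thick 𝓛) (hW : IsSubspace 𝓛 W) {k : Set S} (hk : k ∈ 𝓛)
    (hkW : ¬ k ⊆ W) : ∃ x y : S, x ≠ y ∧ x ∈ k \ W ∧ y ∈ k \ W := by
  obtain ⟨a, b, c, hab, hac, hbc, ha, hb, hc⟩ := hthick k hk
  have hW1 := inter_subsingleton_of_not_subset hW hk hkW
  by_cases haW : a ∈ W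
  · have hbW : b ∉ W := fun h => hab (hW1 ⟨ha, haW⟩ ⟨hb, h⟩)
    have hcW : c ∉ W := fun h => hac (hW1 ⟨ha, haW⟩ ⟨hc, h⟩)
    exact ⟨b, c, hbc, ⟨hb, hbW⟩, ⟨hc, hcW⟩⟩
  by_cases hbW : b ∈ W
  · have hcW : c ∉ W := fun h => hbc (hW1 ⟨hb, hbW⟩ ⟨hc, h⟩)
    exact ⟨a, c, hac, ⟨ha, haW⟩, ⟨hc, hcW⟩⟩
  · exact ⟨a, b, hab, ⟨ha, haW⟩, ⟨hb, hbW⟩⟩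

theorem eq_of_diff_eq (hpls : IsPLS 𝓛) (hthick : Thick 𝓛) (hW : IsSubspace 𝓛 W) {k k' : Set S}
    (hk : k ∈ 𝓛) (hk' : k' ∈ 𝓛) (hkW : ¬ k ⊆ W) (h : k \ W = k' \ W) : k = k' := by
  by_contra hne
  obtain ⟨x, y, hxy, hx, hy⟩ := exists_ne_mem_diff hthick hW hk hkW
  have hx' : x ∈ k' \ W := h ▸ hx
  have hy' : y ∈ k' \ W := h ▸ hy
  exact hxy (hpls.2 k hk k' hk' hne x y ⟨hx.1, hx'.1⟩ ⟨hy.1, hy'.1⟩)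

theorem AtInfinity.eq (hpls : IsPLS 𝓛) (hthick : Thick 𝓛) (hW : IsSubspace 𝓛 W) {K : Set S}
    {a b : S} (ha : AtInfinity 𝓛 W K a) (hb : AtInfinity 𝓛 W K b) : a = b := by
  obtain ⟨k, hk, hkW, rfl, hak⟩ := ha
  obtain ⟨k', hk', -, hK, hbk'⟩ := hb
  obtain rfl := eq_of_diff_eq hpls hthick hW hk hk' hkW hK
  exact inter_subsingleton_of_not_subset hW hk hkW hak hbk'

theorem IsAffineLine.existsUnique_atInfinity (hpls : IsPLS 𝓛) (hthick : Thick 𝓛)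
    (hW : IsSubspace 𝓛 W) {K : Set S} (hK : IsAffineLine 𝓛 W K) : ∃! a, AtInfinity 𝓛 W K a := by
  obtain ⟨k, hk, hkW, hKk, a, hak⟩ := hK
  exact ⟨a, ⟨k, hk, hkW, hKk, hak⟩, fun b hb => hb.eq hpls hthick hW ⟨k, hk, hkW, hKk, hak⟩⟩

theorem parallel_iff_eq_of_atInfinity (hpls : IsPLS 𝓛) (hthick : Thick 𝓛) (hW : IsSubspace 𝓛 W)
    {K L : Set S} {a b : S} (ha : AtInfinity 𝓛 W K a) (hb : AtInfinity 𝓛 W L b) :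
    Parallel 𝓛 W K L ↔ a = b := by
  constructor
  · rintro ⟨k, hk, l, hl, hkW, hlW, hKk, hLl, c, ⟨hck, hcl⟩, hcW⟩
    have hKc : AtInfinity 𝓛 W K c := ⟨k, hk, hkW, hKk, hck, hcW⟩
    have hLc : AtInfinity 𝓛 W L c := ⟨l, hl, hlW, hLl, hcl, hcW⟩
    exact (ha.eq hpls hthick hW hKc).trans (hLc.eq hpls hthick hW hb)
  · rintro rfl
    obtain ⟨k, hk, hkW, hKk, hak, haW⟩ := ha
    obtain ⟨l, hl, hlW, hLl, hal, -⟩ := hb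
    exact ⟨k, hk, l, hl, hkW, hlW, hKk, hLl, a, ⟨hak, hal⟩, haW⟩

theorem exists_disjoint_line_of_not_isHyperplane (hW : IsSubspace 𝓛 W) (hWne : W ≠ Set.univ)
    (hWH : ¬ IsHyperplane 𝓛 W) : ∃ l ∈ 𝓛, Disjoint l W := by
  by_contra! h
  exact hWH ⟨hW, hWne, fun l hl => Set.not_disjoint_iff_nonempty_inter.mp (h l hl)⟩

theorem IsPolarSpace.exists_collin_mem (hpolar : IsPolarSpace 𝓛) {l : Set S} (hl : l ∈ 𝓛)
    {w : S} (hwl : w ∉ l) : ∃ b ∈ l, Collin 𝓛 w b := by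
  rcases hpolar.2 l hl w hwl with ⟨b, ⟨hbl, hwb⟩, -⟩ | hall
  · exact ⟨b, hbl, hwb⟩
  · obtain ⟨x, -, -, hxl, -⟩ := hpolar.1.1 l hl
    exact ⟨x, hxl, hall x hxl⟩

theorem exists_isAffineLine_atInfinity (hpolar : IsPolarSpace 𝓛) (hW : IsSubspace 𝓛 W)
    (hWne : W ≠ Set.univ) (hWH : ¬ IsHyperplane 𝓛 W) {w : S} (hw : w ∈ W) :
    ∃ K, IsAffineLine 𝓛 W K ∧ AtInfinity 𝓛 W K w := by
  obtain ⟨l, hl, hlW⟩ := exists_disjoint_line_of_not_isHyperplane hW hWne hWH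
  obtain ⟨b, hbl, hwb⟩ := hpolar.exists_collin_mem hl fun hwl => hlW.ne_of_mem hwl hw rfl
  have hbW : b ∉ W := hlW.notMem_of_mem_left hbl
  rcases hwb with rfl | ⟨k, hk, hwk, hbk⟩
  · exact absurd hw hbW
  have hkW : ¬ k ⊆ W := fun h => hbW (h hbk)
  exact ⟨k \ W, ⟨k, hk, hkW, rfl, w, hwk, hw⟩, k, hk, hkW, rfl, hwk, hw⟩

end Complement

theorem statement_15_general (𝓛 : Set (Set S)) (hpolar : IsPolarSpace 𝓛) (hthick : Thick 𝓛)
    (W : Set S) (hsub : IsSubspace 𝓛 W) (hproper : W ≠ Set.univ)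
    (hnothyp : ¬ IsHyperplane 𝓛 W) :
    (∀ K : Set S, IsAffineLine 𝓛 W K → ∃! a : S, AtInfinity 𝓛 W K a) ∧
    (∀ K L : Set S, IsAffineLine 𝓛 W K → IsAffineLine 𝓛 W L →
      ∀ a b : S, AtInfinity 𝓛 W K a → AtInfinity 𝓛 W L b →
        (Parallel 𝓛 W K L ↔ a = b)) ∧
    (∀ w ∈ W, ∃ K : Set S, IsAffineLine 𝓛 W K ∧ AtInfinity 𝓛 W K w) :=
  ⟨fun _ hK => hK.existsUnique_atInfinity hpolar.1 hthick hsub,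
    fun _ _ _ _ _ _ ha hb => parallel_iff_eq_of_atInfinity hpolar.1 hthick hsub ha hb,
    fun _ hw => exists_isAffineLine_atInfinity hpolar hsub hproper hnothyp hw⟩

theorem statement_15 (𝓛 : Set (Set S)) (hpolar : IsPolarSpace 𝓛) (hthick : Thick 𝓛)
    (hnd : Nondegenerate 𝓛) (hrank : RankAtLeast 𝓛 3)
    (W : Set S) (hsub : IsSubspace 𝓛 W) (hproper : W ≠ Set.univ)
    (hhyp : ∃ H : Set S, IsHyperplane 𝓛 H ∧ W ⊆ H)
    (hnothyp : ¬ IsHyperplane 𝓛 W) :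
    (∀ K : Set S, IsAffineLine 𝓛 W K → ∃! a : S, AtInfinity 𝓛 W K a) ∧
    (∀ K L : Set S, IsAffineLine 𝓛 W K → IsAffineLine 𝓛 W L →
      ∀ a b : S, AtInfinity 𝓛 W K a → AtInfinity 𝓛 W L b →
        (Parallel 𝓛 W K L ↔ a = b)) ∧
    (∀ w ∈ W, ∃ K : Set S, IsAffineLine 𝓛 W K ∧ AtInfinity 𝓛 W K w) :=
  statement_15_general 𝓛 hpolar hthick W hsub hproper hnothyp

end PolarComp
end
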